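/- arXiv:2402.07522 — 6 statements merged into one kernel-verified Lean document; each statement's English description precedes it below -/
import Mathlib

section
/- Let B = ⊕_{n∈ℤ} B_n be a ℤ-graded commutative ring and suppose f ∈ B_d is invertible in B for some d > 0. Then the morphism of graded rings φ_f : B_0[t, t^{-1}] → B^{(d)} = ⊕_{n ∈ dℤ} B_n sending t to f is an isomorphism. -/
/-!
A homogeneous unit `u` of degree `d` has homogeneous powers `u ^ m` of degree `d * m` for all
`m : ℤ`, so `t ↦ u` sends `b t^m` to the degree-`d m` piece of `B`. Reading off the degree-`d m`
component of `φ p` returns `p_m u^m`, which determines `p_m` since `u^m` is a unit: this gives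
injectivity. Conversely `x ∈ B_{d m}` is `φ ((x u^{-m}) t^m)`, and the Veronese ring is spanned by
such `x`.
-/

namespace SetLike

variable {ι A σ : Type*} [AddGroup ι] [DecidableEq ι] [Semiring A] [SetLike σ A]
  [AddSubmonoidClass σ A] (𝒜 : ι → σ) [GradedRing 𝒜]

theorem val_inv_mem_graded {i : ι} {u : Aˣ} (hu : (u : A) ∈ 𝒜 i) :
    ((u⁻¹ : Aˣ) : A) ∈ 𝒜 (-i) := by
  set w : A := (DirectSum.decompose 𝒜 ((u⁻¹ : Aˣ) : A) (-i) : A)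
  -- the degree-0 component of `u * u⁻¹ = 1` is `u * w`
  have huw : (u : A) * w = 1 := by
    have h := DirectSum.coe_decompose_mul_add_of_left_mem 𝒜 (b := ((u⁻¹ : Aˣ) : A)) (j := -i) hu
    rwa [Units.mul_inv, add_neg_cancel, DirectSum.decompose_of_mem_same 𝒜 (one_mem_graded 𝒜),
      eq_comm] at h
  rw [Units.inv_eq_of_mul_eq_one_right huw]
  exact coe_mem _

theorem val_zpow_mem_graded {i : ι} {u : Aˣ} (hu : (u : A) ∈ 𝒜 i) (m : ℤ) :
    ((u ^ m : Aˣ) : A) ∈ 𝒜 (m • i) := by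
  obtain ⟨n, rfl | rfl⟩ := Int.eq_nat_or_neg m
  · simpa using pow_mem_graded n hu
  · rw [zpow_neg, neg_zsmul, zpow_natCast, natCast_zsmul]
    exact val_inv_mem_graded 𝒜 (by simpa using pow_mem_graded n hu)

end SetLike

section LaurentEval

open AddMonoidAlgebra DirectSum

variable {B σ : Type*} [CommSemiring B] [SetLike σ B] [AddSubmonoidClass σ B] (𝒜 : ℤ → σ)
  [GradedRing 𝒜] (u : Bˣ)

/-- The map `φ_u : B₀[t, t⁻¹] → B`, `t ↦ u`; here `single m b` is the monomial `b t^m`. -/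
noncomputable def laurentEval : AddMonoidAlgebra (𝒜 0) ℤ →ₐ[𝒜 0] B :=
  lift (𝒜 0) B ℤ ((Units.coeHom B).comp (zpowersHom Bˣ u))

theorem laurentEval_single (m : ℤ) (b : 𝒜 0) :
    laurentEval 𝒜 u (single m b) = (b : B) * ↑(u ^ m) := by
  rw [laurentEval, lift_single, Algebra.smul_def]
  rfl

variable {𝒜 u} {d : ℤ}

theorem laurentEval_single_mem (hu : (u : B) ∈ 𝒜 d) (m : ℤ) (b : 𝒜 0) :
    laurentEval 𝒜 u (single m b) ∈ 𝒜 (d * m) := by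
  rw [laurentEval_single, ← zero_add (d * m), mul_comm, ← smul_eq_mul]
  exact SetLike.mul_mem_graded b.2 (SetLike.val_zpow_mem_graded 𝒜 hu m)

theorem coe_decompose_laurentEval_mul (hd : d ≠ 0) (hu : (u : B) ∈ 𝒜 d)
    (p : AddMonoidAlgebra (𝒜 0) ℤ) (m : ℤ) :
    (decompose 𝒜 (laurentEval 𝒜 u p) (d * m) : B) = p.coeff m * ↑(u ^ m) := by
  induction p using AddMonoidAlgebra.induction_linear with
  | zero => simp
  | add p q hp hq => simp [hp, hq, add_mul]
  | single n b =>
    by_cases hnm : n = m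
    · subst hnm
      rw [decompose_of_mem_same 𝒜 (laurentEval_single_mem hu n b), laurentEval_single,
        coeff_single, Finsupp.single_eq_same]
    · rw [decompose_of_mem_ne 𝒜 (laurentEval_single_mem hu n b) (by simpa [hd] using hnm),
        coeff_single, Finsupp.single_eq_of_ne (Ne.symm hnm), ZeroMemClass.coe_zero, zero_mul]

theorem coe_decompose_laurentEval_of_not_dvd (hu : (u : B) ∈ 𝒜 d)
    (p : AddMonoidAlgebra (𝒜 0) ℤ) {k : ℤ} (hk : ¬ d ∣ k) :
    (decompose 𝒜 (laurentEval 𝒜 u p) k : B) = 0 := by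
  induction p using AddMonoidAlgebra.induction_linear with
  | zero => simp
  | add p q hp hq => simp [hp, hq]
  | single n b =>
    exact decompose_of_mem_ne 𝒜 (laurentEval_single_mem hu n b) fun h => hk ⟨n, h.symm⟩

theorem laurentEval_injective (hd : d ≠ 0) (hu : (u : B) ∈ 𝒜 d) :
    Function.Injective (laurentEval 𝒜 u) := by
  intro p q hpq
  ext m : 2
  have h := coe_decompose_laurentEval_mul hd hu p m
  rw [hpq, coe_decompose_laurentEval_mul hd hu q m] at h
  exact ((u ^ m).mul_left_inj.mp h).symm

theorem mem_range_laurentEval_of_mem (hu : (u : B) ∈ 𝒜 d) {m : ℤ} {x : B} (hx : x ∈ 𝒜 (d * m)) :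
    x ∈ Set.range (laurentEval 𝒜 u) := by
  have hx' : x * ↑(u ^ (-m)) ∈ 𝒜 0 := by
    have := SetLike.mul_mem_graded hx (SetLike.val_zpow_mem_graded 𝒜 hu (-m))
    rwa [smul_eq_mul, neg_mul, mul_comm, add_neg_cancel] at this
  refine ⟨single m ⟨_, hx'⟩, ?_⟩
  rw [laurentEval_single, mul_assoc, ← Units.val_mul, ← zpow_add, neg_add_cancel, zpow_zero,
    Units.val_one, mul_one]

theorem range_laurentEval (hu : (u : B) ∈ 𝒜 d) :
    Set.range (laurentEval 𝒜 u) = {x : B | ∀ k : ℤ, ¬ d ∣ k → (decompose 𝒜 x k : B) = 0} := by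
  classical
  ext x
  refine ⟨?_, fun hx => ?_⟩
  · rintro ⟨p, rfl⟩ k hk
    exact coe_decompose_laurentEval_of_not_dvd hu p hk
  · rw [← sum_support_decompose 𝒜 x]
    refine Subalgebra.sum_mem (laurentEval 𝒜 u).range fun k _ => ?_
    by_cases hk : d ∣ k
    · obtain ⟨m, rfl⟩ := hk
      exact mem_range_laurentEval_of_mem hu (SetLike.coe_mem _)
    · simp [hx k hk]

end LaurentEval

theorem stmt4 (B : Type) [CommRing B] (𝒜 : ℤ → AddSubgroup B) [GradedRing 𝒜]
    (d : ℤ) (hd : 0 < d) (u : Bˣ) (hu : (u : B) ∈ 𝒜 d) :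
    ∃ φ : AddMonoidAlgebra (𝒜 0) ℤ →+* B,
      (∀ (m : ℤ) (b : 𝒜 0), φ (AddMonoidAlgebra.single m b) = (b : B) * ↑(u ^ m)) ∧
      Function.Injective φ ∧
      Set.range φ = {x : B | ∀ k : ℤ, ¬ d ∣ k → (DirectSum.decompose 𝒜 x k : B) = 0} ∧
      ∀ (m : ℤ) (b : 𝒜 0), φ (AddMonoidAlgebra.single m b) ∈ 𝒜 (d * m) :=
  ⟨laurentEval 𝒜 u, laurentEval_single 𝒜 u, laurentEval_injective hd.ne' hu,
    range_laurentEval hu, laurentEval_single_mem hu⟩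
end

section
/- Let B = ⊕_{n∈ℤ} B_n be a ℤ-graded commutative ring with B_0 a field, and let d > 0 be minimal such that B_d contains a unit f of B. If e is not divisible by d and g ∈ B_e, then g^d = 0 in B. -/
/-!
Degrees of homogeneous units form a subgroup of `ℤ`; by minimality of `d` it is `dℤ`. If
`g ^ d ≠ 0`, multiplying it by a unit of degree `-d e` gives a nonzero element of the field `B₀`,
so `g ^ d`, hence `g`, is a unit. Then `e` is the degree of a homogeneous unit, so `d ∣ e`.
-/

open DirectSum

namespace GradedRing

variable {ι B σ : Type*} [DecidableEq ι] [AddCommGroup ι] [CommRing B] [SetLike σ B]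
  [AddSubgroupClass σ B] (𝒜 : ι → σ) [GradedRing 𝒜]

/-- The degree `-i` component of `v⁻¹` is already an inverse of `v`. -/
lemma exists_unit_mem_neg {i : ι} {v : Bˣ} (hv : (v : B) ∈ 𝒜 i) :
    ∃ w : Bˣ, (w : B) ∈ 𝒜 (-i) := by
  have hmul : (decompose 𝒜 (↑v⁻¹ : B) (-i) : B) * v = 1 := by
    rw [← coe_decompose_mul_add_of_right_mem 𝒜 hv, neg_add_cancel, Units.inv_mul]
    exact decompose_of_mem_same 𝒜 SetLike.GradedOne.one_mem
  exact ⟨(IsUnit.of_mul_eq_one _ hmul).unit, SetLike.coe_mem _⟩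

def unitDegrees : AddSubgroup ι where
  carrier := {i | ∃ v : Bˣ, (v : B) ∈ 𝒜 i}
  zero_mem' := ⟨1, SetLike.GradedOne.one_mem⟩
  add_mem' := fun ⟨v, hv⟩ ⟨w, hw⟩ => ⟨v * w, SetLike.mul_mem_graded hv hw⟩
  neg_mem' := fun ⟨_, hv⟩ => exists_unit_mem_neg 𝒜 hv

lemma isUnit_of_mem_zero (hfield : IsField (𝒜 0)) {x : B} (hx : x ∈ 𝒜 0) (hx0 : x ≠ 0) :
    IsUnit x := by
  obtain ⟨y, hy⟩ := hfield.mul_inv_cancel (a := ⟨x, hx⟩) (by simpa [Subtype.ext_iff] using hx0)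
  exact IsUnit.of_mul_eq_one (y : B) (congrArg Subtype.val hy)

lemma isUnit_of_mem_unitDegrees (hfield : IsField (𝒜 0)) {i : ι} (hi : i ∈ unitDegrees 𝒜)
    {x : B} (hx : x ∈ 𝒜 i) (hx0 : x ≠ 0) : IsUnit x := by
  obtain ⟨v, hv⟩ := (unitDegrees 𝒜).neg_mem hi
  have hxv : x * v ∈ 𝒜 0 := by simpa using SetLike.mul_mem_graded hx hv
  have hxv0 : x * v ≠ 0 := fun h => hx0 (by simpa using congrArg (· * (↑v⁻¹ : B)) h)
  exact isUnit_of_mul_isUnit_left (isUnit_of_mem_zero 𝒜 hfield hxv hxv0)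

end GradedRing

lemma AddSubgroup.natCast_dvd_of_mem {S : AddSubgroup ℤ} {d : ℕ} (hd : 0 < d) (hdS : (d : ℤ) ∈ S)
    (hmin : ∀ d' : ℕ, 0 < d' → (d' : ℤ) ∈ S → d ≤ d') {e : ℤ} (he : e ∈ S) : (d : ℤ) ∣ e := by
  have hr : e % d ∈ S := by
    rw [Int.emod_def, mul_comm, ← smul_eq_mul]
    exact sub_mem he (zsmul_mem hdS (e / d))
  have hr0 : 0 ≤ e % d := Int.emod_nonneg e (by omega)
  have hrd : e % d < d := Int.emod_lt_of_pos e (by omega)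
  refine Int.dvd_of_emod_eq_zero (by_contra fun hne => ?_)
  have := hmin (e % d).toNat (by omega) (by rwa [Int.toNat_of_nonneg hr0])
  omega

/-- If `B₀` is a field and `d > 0` is minimal such that `B_d` contains a unit of `B`, then
any homogeneous `g` of degree `e` not divisible by `d` satisfies `g ^ d = 0`. -/
theorem stmt5 (B : Type) [CommRing B] (𝒜 : ℤ → AddSubgroup B) [GradedRing 𝒜]
    (hfield : IsField (𝒜 0)) (d : ℕ) (hd : 0 < d) (u : Bˣ) (hu : (u : B) ∈ 𝒜 (d : ℤ))
    (hmin : ∀ d' : ℕ, 0 < d' → (∃ v : Bˣ, (v : B) ∈ 𝒜 (d' : ℤ)) → d ≤ d')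
    (e : ℤ) (he : ¬ (d : ℤ) ∣ e) (g : B) (hg : g ∈ 𝒜 e) :
    g ^ d = 0 := by
  by_contra hgd
  have hdmem : (d : ℤ) ∈ GradedRing.unitDegrees 𝒜 := ⟨u, hu⟩
  have hdeg : d • e ∈ GradedRing.unitDegrees 𝒜 := by
    rw [nsmul_eq_mul, mul_comm, ← smul_eq_mul]
    exact zsmul_mem hdmem e
  have hunit : IsUnit g :=
    (isUnit_pow_iff hd.ne').1 (GradedRing.isUnit_of_mem_unitDegrees 𝒜 hfield hdeg
      (SetLike.pow_mem_graded d hg) hgd)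
  exact he (AddSubgroup.natCast_dvd_of_mem hd hdmem hmin ⟨hunit.unit, hg⟩)
end

section
/- Let B = ⊕_{n∈ℤ} B_n be a ℤ-graded commutative ring with B_0 a field, and let d > 0 be minimal such that B_d contains a unit f of B. Then the composite map B_0[t,t^{-1}] → B^{(d)} ↪ B → B_red, sending t to the class of f, is an isomorphism of graded rings. -/
/-!
A homogeneous element `x` of degree `n` that is not nilpotent is a unit, since `x ^ d * u ^ (-n)`
is a nonzero element of the field `B₀`. Degrees of homogeneous units are closed under `gcd`
(Bézout), so by minimality of `d` every homogeneous element of degree not divisible by `d` is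
nilpotent, while one of degree `d * m` is `b * u ^ m` with `b ∈ B₀`; this gives surjectivity.
For injectivity, the degree `d * m` component of the image of a Laurent polynomial is its `m`-th
coefficient times `u ^ m`; since the nilradical is homogeneous and `B₀` is reduced, a polynomial
mapping into the nilradical has all coefficients zero.
-/

open DirectSum SetLike LaurentPolynomial

section Units

variable {ι R σ : Type*} [DecidableEq ι] [AddGroup ι] [Semiring R] [SetLike σ R]
  [AddSubmonoidClass σ R] {𝒜 : ι → σ} [GradedRing 𝒜]

theorem Units.val_inv_mem_graded {n : ι} {w : Rˣ} (hw : (w : R) ∈ 𝒜 n) :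
    ((w⁻¹ : Rˣ) : R) ∈ 𝒜 (-n) := by
  set c : R := (decompose 𝒜 ((w⁻¹ : Rˣ) : R) (-n) : R)
  -- the degree-zero component of `w * w⁻¹ = 1` is `w * c`
  have hwc : (w : R) * c = 1 := by
    have h :=
      coe_of_mul_apply_add (A := 𝒜) ⟨(w : R), hw⟩ (decompose 𝒜 ((w⁻¹ : Rˣ) : R)) (-n)
    rwa [← decompose_of_mem 𝒜 hw, ← decompose_mul, Units.mul_inv, add_neg_cancel,
      decompose_of_mem_same 𝒜 (one_mem_graded 𝒜), eq_comm] at h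
  rw [Units.inv_eq_of_mul_eq_one_right hwc]
  exact SetLike.coe_mem _

theorem Units.val_zpow_mem_graded {n : ι} {w : Rˣ} (hw : (w : R) ∈ 𝒜 n) (m : ℤ) :
    ((w ^ m : Rˣ) : R) ∈ 𝒜 (m • n) := by
  cases m with
  | ofNat k => simpa using pow_mem_graded k hw
  | negSucc k =>
    simpa [zpow_negSucc, negSucc_zsmul, ← inv_pow] using
      pow_mem_graded (k + 1) (Units.val_inv_mem_graded hw)

end Units

section IntGraded

variable {B σ : Type*} [SetLike σ B] {𝒜 : ℤ → σ}

theorem exists_unit_mem_graded_gcd [Semiring B] [AddSubmonoidClass σ B] [GradedRing 𝒜]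
    {n k : ℤ} {v w : Bˣ} (hv : (v : B) ∈ 𝒜 n) (hw : (w : B) ∈ 𝒜 k) :
    ∃ x : Bˣ, (x : B) ∈ 𝒜 (n.gcd k : ℤ) := by
  refine ⟨v ^ n.gcdA k * w ^ n.gcdB k, ?_⟩
  rw [Int.gcd_eq_gcd_ab, mul_comm n, mul_comm k, Units.val_mul]
  exact mul_mem_graded (Units.val_zpow_mem_graded hv _) (Units.val_zpow_mem_graded hw _)

section CommSemiring

variable [CommSemiring B] [AddSubmonoidClass σ B] [GradedRing 𝒜]

theorem isUnit_of_mem_graded_of_notMem_nilradical (hfield : IsField (𝒜 0)) {d : ℕ}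
    (hd : 0 < d) {u : Bˣ} (hu : (u : B) ∈ 𝒜 d) {n : ℤ} {x : B} (hx : x ∈ 𝒜 n)
    (hnil : x ∉ nilradical B) : IsUnit x := by
  let _ : Semifield (𝒜 0) := hfield.toSemifield
  have ha : x ^ d * ((u ^ (-n) : Bˣ) : B) ∈ 𝒜 0 := by
    convert mul_mem_graded (pow_mem_graded d hx) (Units.val_zpow_mem_graded hu (-n)) using 2
    simp [mul_comm]
  have ha_ne : (⟨_, ha⟩ : 𝒜 0) ≠ 0 := by
    intro h0
    have hmem : x ^ d * ((u ^ (-n) : Bˣ) : B) ∈ nilradical B := by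
      rw [show x ^ d * ((u ^ (-n) : Bˣ) : B) = 0 from congrArg Subtype.val h0]
      exact zero_mem _
    rw [Ideal.mul_unit_mem_iff_mem _ (Units.isUnit _), mem_nilradical,
      IsNilpotent.pow_iff_pos hd.ne'] at hmem
    exact hnil hmem
  have hunit : IsUnit (x ^ d * ((u ^ (-n) : Bˣ) : B)) :=
    (isUnit_iff_ne_zero.mpr ha_ne).map (algebraMap (𝒜 0) B)
  exact (isUnit_pow_iff hd.ne').mp (isUnit_of_mul_isUnit_left hunit)

theorem mem_nilradical_of_mem_graded_of_not_dvd (hfield : IsField (𝒜 0)) {d : ℕ}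
    (hd : 0 < d) {u : Bˣ} (hu : (u : B) ∈ 𝒜 d)
    (hmin : ∀ d' : ℕ, 0 < d' → (∃ v : Bˣ, (v : B) ∈ 𝒜 (d' : ℤ)) → d ≤ d')
    {n : ℤ} {x : B} (hx : x ∈ 𝒜 n) (hdn : ¬ (d : ℤ) ∣ n) : x ∈ nilradical B := by
  by_contra hnil
  obtain ⟨w, rfl⟩ := isUnit_of_mem_graded_of_notMem_nilradical hfield hd hu hx hnil
  have hn : n ≠ 0 := by rintro rfl; exact hdn (dvd_zero _)
  have hgcd_le : n.gcd d ≤ d := Nat.le_of_dvd hd (by exact_mod_cast Int.gcd_dvd_right n d)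
  have hgcd_eq : n.gcd d = d := le_antisymm hgcd_le
    (hmin _ (Int.gcd_pos_of_ne_zero_left _ hn) (exists_unit_mem_graded_gcd hx hu))
  exact hdn (hgcd_eq ▸ Int.gcd_dvd_left n d)

theorem eval₂_C_mul_T_mem_graded {d : ℤ} {u : Bˣ} (hu : (u : B) ∈ 𝒜 d) (m : ℤ)
    (b : 𝒜 0) :
    eval₂ (algebraMap (𝒜 0) B) u (C b * T m) ∈ 𝒜 (d * m) := by
  rw [eval₂_C_mul_T, ← zero_add (d * m), mul_comm, ← smul_eq_mul]
  exact mul_mem_graded b.2 (Units.val_zpow_mem_graded hu m)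

theorem coe_decompose_eval₂ {d : ℤ} (hd : d ≠ 0) {u : Bˣ} (hu : (u : B) ∈ 𝒜 d)
    (p : (𝒜 0)[T;T⁻¹]) (m : ℤ) :
    (decompose 𝒜 (eval₂ (algebraMap (𝒜 0) B) u p) (d * m) : B) =
      p.coeff m * ((u ^ m : Bˣ) : B) := by
  induction p using LaurentPolynomial.induction_on' with
  | add p q hp hq => simp [hp, hq, add_mul]
  | C_mul_T k b =>
    obtain rfl | hkm := eq_or_ne k m
    · rw [decompose_of_mem_same 𝒜 (eval₂_C_mul_T_mem_graded hu k b), eval₂_C_mul_T,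
        ← single_eq_C_mul_T, AddMonoidAlgebra.coeff_single, Finsupp.single_eq_same]
      rfl
    · rw [decompose_of_mem_ne 𝒜 (eval₂_C_mul_T_mem_graded hu k b) (by simpa [hd] using hkm),
        ← single_eq_C_mul_T, AddMonoidAlgebra.coeff_single, Finsupp.single_eq_of_ne hkm.symm]
      simp

end CommSemiring

section CommRing

variable [CommRing B] [AddSubgroupClass σ B] [GradedRing 𝒜]

theorem mk_comp_eval₂_injective (hfield : IsField (𝒜 0)) {d : ℤ} (hd : d ≠ 0) {u : Bˣ}
    (hu : (u : B) ∈ 𝒜 d) :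
    Function.Injective
      ((Ideal.Quotient.mk (nilradical B)).comp (eval₂ (algebraMap (𝒜 0) B) u)) := by
  let _ : Field (𝒜 0) := hfield.toField
  rw [injective_iff_map_eq_zero]
  intro p hp
  have hnil : (nilradical B).IsHomogeneous 𝒜 := (Ideal.IsHomogeneous.bot 𝒜).radical
  ext m
  have hcoeff : (p.coeff m : B) ∈ nilradical B := by
    rw [← Ideal.mul_unit_mem_iff_mem _ (u ^ m).isUnit, ← coe_decompose_eval₂ hd hu]
    exact hnil _ (Ideal.Quotient.eq_zero_iff_mem.mp hp)
  rw [mem_nilradical, ← GradeZero.algebraMap_apply,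
    IsNilpotent.map_iff Subtype.val_injective] at hcoeff
  simpa using hcoeff.eq_zero

theorem mk_comp_eval₂_surjective (hfield : IsField (𝒜 0)) {d : ℕ} (hd : 0 < d) {u : Bˣ}
    (hu : (u : B) ∈ 𝒜 d)
    (hmin : ∀ d' : ℕ, 0 < d' → (∃ v : Bˣ, (v : B) ∈ 𝒜 (d' : ℤ)) → d ≤ d') :
    Function.Surjective
      ((Ideal.Quotient.mk (nilradical B)).comp (eval₂ (algebraMap (𝒜 0) B) u)) := by
  intro y
  obtain ⟨x, rfl⟩ := Ideal.Quotient.mk_surjective y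
  induction x using DirectSum.Decomposition.inductionOn 𝒜 with
  | zero => exact ⟨0, by simp⟩
  | add x y hx hy =>
    obtain ⟨p, hp⟩ := hx
    obtain ⟨q, hq⟩ := hy
    exact ⟨p + q, by rw [map_add, hp, hq, map_add]⟩
  | @homogeneous i z =>
    by_cases hdvd : (d : ℤ) ∣ i
    · obtain ⟨m, rfl⟩ := hdvd
      have hb : (z : B) * ((u ^ (-m) : Bˣ) : B) ∈ 𝒜 0 := by
        convert mul_mem_graded z.2 (Units.val_zpow_mem_graded hu (-m)) using 2
        simp [mul_comm]
      refine ⟨C ⟨_, hb⟩ * T m, ?_⟩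
      simp [mul_assoc, ← Units.val_mul]
    · refine ⟨0, ?_⟩
      rw [map_zero, eq_comm, Ideal.Quotient.eq_zero_iff_mem]
      exact mem_nilradical_of_mem_graded_of_not_dvd hfield hd hu hmin z.2 hdvd

end CommRing

end IntGraded

/-- If `B₀` is a field and `d > 0` is minimal such that `B_d` contains a unit `f = ↑u` of `B`,
then `B₀[t, t⁻¹] → B_red`, `t ↦ f mod Nil(B)`, is an isomorphism of graded rings (where `t`
has degree `d`, so the degree `d·m` component is sent into the image of `𝒜 (d·m)`). -/
theorem stmt6 (B : Type) [CommRing B] (𝒜 : ℤ → AddSubgroup B) [GradedRing 𝒜]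
    (hfield : IsField (𝒜 0)) (d : ℕ) (hd : 0 < d) (u : Bˣ) (hu : (u : B) ∈ 𝒜 (d : ℤ))
    (hmin : ∀ d' : ℕ, 0 < d' → (∃ v : Bˣ, (v : B) ∈ 𝒜 (d' : ℤ)) → d ≤ d') :
    ∃ ψ : AddMonoidAlgebra (𝒜 0) ℤ →+* B ⧸ nilradical B,
      (∀ (m : ℤ) (b : 𝒜 0), ψ (AddMonoidAlgebra.single m b) =
          Ideal.Quotient.mk (nilradical B) ((b : B) * ↑(u ^ m))) ∧
      Function.Bijective ψ ∧
      ∀ (m : ℤ) (b : 𝒜 0), ∃ c ∈ 𝒜 ((d : ℤ) * m),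
        ψ (AddMonoidAlgebra.single m b) = Ideal.Quotient.mk (nilradical B) c := by
  refine ⟨(Ideal.Quotient.mk (nilradical B)).comp (eval₂ (algebraMap (𝒜 0) B) u),
    fun m b => ?_, ⟨mk_comp_eval₂_injective hfield (mod_cast hd.ne') hu,
      mk_comp_eval₂_surjective hfield hd hu hmin⟩,
    fun m b => ⟨_, eval₂_C_mul_T_mem_graded hu m b, ?_⟩⟩
  · simp [eval₂_C_mul_T]
  · simp
end

section
/- Let q be a prime power and a_0,...,a_n positive integers. Every F_q-rational point of P(a_0,...,a_n) has exactly q-1 representatives in F_q^{n+1} \ {0}. Consequently, the number of F_q-rational points of P(a_0,...,a_n) equals p_n = q^n + q^{n-1} + ... + q + 1. -/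
/-!
If the class of `x` is fixed by Frobenius, then `λ • x^q = x` for some `λ`; rescaling `x` by a
`(q - 1)`-st root `ν` of `λ` gives a representative `ν • x` all of whose coordinates are fixed
by `z ↦ z^q`, hence lie in `𝔽_q`.

If `y₀` and `y` are `𝔽_q`-rational representatives of one point, `y = λ • y₀` with
`λ^{a_i} ∈ 𝔽_q^×` for every `i` in the support of `y₀`, so `λ^g ∈ 𝔽_q^×` for the gcd `g` of
those weights. Thus the representatives of `[y₀]` are exactly `(t^{a_i / g} y₀_i)_i` for
`t ∈ 𝔽_q^×`, and `t` is determined because the reduced weights `a_i / g` are coprime. So every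
point has `q - 1` representatives, and the `q^{n+1} - 1` nonzero vectors of `𝔽_q^{n+1}` split
into fibres of that size.
-/

noncomputable section

open MvPolynomial

/-- The weighted scalar equivalence on vectors: `x ∼ y` iff `y i = λ^{a i} * x i` for some
unit `λ`. -/
def wSetoid (K : Type) [Field K] (n : ℕ) (a : Fin (n + 1) → ℕ) :
    Setoid (Fin (n + 1) → K) where
  r x y := ∃ lam : Kˣ, ∀ i, (lam : K) ^ a i * x i = y i
  iseqv := by
    refine ⟨fun x => ⟨1, by simp⟩, ?_, ?_⟩
    · rintro x y ⟨l, h⟩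
      refine ⟨l⁻¹, fun i => ?_⟩
      rw [← h i, ← mul_assoc, ← mul_pow]
      simp
    · rintro x y z ⟨l, h⟩ ⟨m, h'⟩
      refine ⟨m * l, fun i => ?_⟩
      rw [← h' i, ← h i, ← mul_assoc, ← mul_pow, Units.val_mul]

/-- The weighted projective space `P(a_0, …, a_n)` over `K` (together with the class of the
zero vector). -/
def WP (K : Type) [Field K] (n : ℕ) (a : Fin (n + 1) → ℕ) := Quotient (wSetoid K n a)

/-- The weighted projective point attached to a vector. -/
def wcls {K : Type} [Field K] {n : ℕ} (a : Fin (n + 1) → ℕ) (x : Fin (n + 1) → K) :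
    WP K n a := Quotient.mk (wSetoid K n a) x

/-- Lift a vector with coordinates in `F` to the algebraic closure. -/
def liftv (F : Type) [Field F] (n : ℕ) (y : Fin (n + 1) → F) :
    Fin (n + 1) → AlgebraicClosure F := fun k => algebraMap F (AlgebraicClosure F) (y k)

/-- The `𝔽_q`-rational points of `P(a_0, …, a_n)`: nonzero classes fixed by the
`q`-power Frobenius. -/
def RatPts (F : Type) [Field F] [Fintype F] (n : ℕ) (a : Fin (n + 1) → ℕ) :
    Set (WP (AlgebraicClosure F) n a) :=
  {P | (∃ x : Fin (n + 1) → AlgebraicClosure F, x ≠ 0 ∧ wcls a x = P) ∧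
    ∀ x : Fin (n + 1) → AlgebraicClosure F, wcls a x = P →
      wcls a (fun k => x k ^ Fintype.card F) = P}

/-- The set of points admitting an `𝔽_q`-rational representative whose `i`-th coordinate is
the prescribed value `c`. -/
def Zset (F : Type) [Field F] [Fintype F] (n : ℕ) (a : Fin (n + 1) → ℕ) (i : Fin (n + 1))
    (c : F) : Set (WP (AlgebraicClosure F) n a) :=
  {P | ∃ y : Fin (n + 1) → F, y ≠ 0 ∧ y i = c ∧ wcls a (liftv F n y) = P}

/-- The `i`-th coordinate point `O_i = [0 : ⋯ : 0 : 1 : 0 : ⋯ : 0]`. -/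
def Oi (F : Type) [Field F] [Fintype F] (n : ℕ) (a : Fin (n + 1) → ℕ) (i : Fin (n + 1)) :
    WP (AlgebraicClosure F) n a := wcls a (liftv F n (Pi.single i 1))

/-- The set `R_i`: rational points with `i`-th coordinate `0`, together with `O_i`. -/
def Rset (F : Type) [Field F] [Fintype F] (n : ℕ) (a : Fin (n + 1) → ℕ) (i : Fin (n + 1)) :
    Set (WP (AlgebraicClosure F) n a) := Zset F n a i 0 ∪ {Oi F n a i}

/-- The set `T_i`: rational points with a representative having `i`-th coordinate `1`,
excluding `O_i`. -/
def Tset (F : Type) [Field F] [Fintype F] (n : ℕ) (a : Fin (n + 1) → ℕ) (i : Fin (n + 1)) :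
    Set (WP (AlgebraicClosure F) n a) := Zset F n a i 1 \ {Oi F n a i}

/-- The set `I_i`: rational points whose `i`-th coordinate (in an `𝔽_q`-rational
representative) is a nonzero non-`a_i`-th power. -/
def Iset (F : Type) [Field F] [Fintype F] (n : ℕ) (a : Fin (n + 1) → ℕ) (i : Fin (n + 1)) :
    Set (WP (AlgebraicClosure F) n a) :=
  {P | ∃ y : Fin (n + 1) → F, y ≠ 0 ∧ wcls a (liftv F n y) = P ∧ y i ≠ 0 ∧
    ¬ ∃ z : F, z ^ a i = y i}

/-- `F` is weighted homogeneous of degree `d` for the weights `a`: over the algebraic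
closure, `F(λ^{a_0}x_0, …, λ^{a_n}x_n) = λ^d F(x_0, …, x_n)`. -/
def WHomog (F : Type) [Field F] [Fintype F] (n : ℕ) (a : Fin (n + 1) → ℕ)
    (Fp : MvPolynomial (Fin (n + 1)) F) (d : ℕ) : Prop :=
  ∀ (lam : AlgebraicClosure F) (x : Fin (n + 1) → AlgebraicClosure F),
    MvPolynomial.eval (fun k => lam ^ a k * x k)
        (MvPolynomial.map (algebraMap F (AlgebraicClosure F)) Fp)
      = lam ^ d * MvPolynomial.eval x (MvPolynomial.map (algebraMap F (AlgebraicClosure F)) Fp)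

/-- The `𝔽_q`-rational points of the hypersurface `V(F)` in `P(a_0, …, a_n)`. -/
def VRat (F : Type) [Field F] [Fintype F] (n : ℕ) (a : Fin (n + 1) → ℕ)
    (Fp : MvPolynomial (Fin (n + 1)) F) : Set (WP (AlgebraicClosure F) n a) :=
  {P | ∃ y : Fin (n + 1) → F, y ≠ 0 ∧ MvPolynomial.eval y Fp = 0 ∧
    wcls a (liftv F n y) = P}

/-- The `i`-th power map on coordinates. -/
def pimapFun (K : Type) [Field K] (n : ℕ) (a : Fin (n + 1) → ℕ) (i : Fin (n + 1))
    (x : Fin (n + 1) → K) : Fin (n + 1) → K := Function.update x i (x i ^ a i)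

/-- The morphism `π_i : P(a_0, …, a_{i-1}, 1, a_{i+1}, …, a_n) → P(a_0, …, a_n)` raising
the `i`-th coordinate to the power `a_i`. -/
def pimap (K : Type) [Field K] (n : ℕ) (a : Fin (n + 1) → ℕ) (i : Fin (n + 1)) :
    WP K n (Function.update a i 1) → WP K n a :=
  Quotient.lift (fun x => wcls a (pimapFun K n a i x)) (by
    rintro x y ⟨l, h⟩
    refine Quotient.sound ⟨l, fun k => ?_⟩
    rcases eq_or_ne k i with rfl | hk
    · have hi := h k
      rw [Function.update_self] at hi
      simp only [pimapFun, Function.update_self, ← hi, pow_one, mul_pow]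
    · have hi := h k
      rw [Function.update_of_ne hk] at hi
      simp only [pimapFun, Function.update_of_ne hk, hi])

/-- The pullback `π_i^* F`, substituting `X_i^{a_i}` for `X_i`. -/
def pistar (F : Type) [Field F] (n : ℕ) (a : Fin (n + 1) → ℕ) (i : Fin (n + 1))
    (Fp : MvPolynomial (Fin (n + 1)) F) : MvPolynomial (Fin (n + 1)) F :=
  MvPolynomial.bind₁ (fun k => if k = i then X k ^ a i else X k) Fp

/-- The polynomial `F ∘ σ_i^j`, substituting `δ^j X_i` for `X_i`. -/
def sigmaPoly (F : Type) [Field F] (n : ℕ) (i : Fin (n + 1)) (δ : F) (j : ℕ)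
    (Fp : MvPolynomial (Fin (n + 1)) F) : MvPolynomial (Fin (n + 1)) F :=
  MvPolynomial.bind₁ (fun k => if k = i then MvPolynomial.C (δ ^ j) * X k else X k) Fp

theorem mem_range_algebraMap_of_pow_card_eq_self {F K : Type*} [Field F] [Fintype F]
    [Field K] [Algebra F K] {x : K} (hx : x ^ Fintype.card F = x) :
    x ∈ (algebraMap F K).range := by
  have hq := Fintype.one_lt_card (α := F)
  have hsplits : (Polynomial.X ^ Fintype.card F - Polynomial.X : Polynomial F).Splits := by
    rw [Polynomial.splits_iff_card_roots, FiniteField.roots_X_pow_card_sub_X,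
      FiniteField.X_pow_card_sub_X_natDegree_eq F hq]
    rfl
  exact hsplits.mem_range_of_isRoot (FiniteField.X_pow_card_sub_X_ne_zero F hq)
    (by simp [hx])

theorem pow_gcd_mem_of_forall_pow_mem {G ι : Type*} [CommGroup G] {H : Subgroup G}
    {s : Finset ι} {a : ι → ℕ} {x : G} (h : ∀ i ∈ s, x ^ a i ∈ H) : x ^ s.gcd a ∈ H := by
  have hdvd : orderOf (x : G ⧸ H) ∣ s.gcd a := Finset.dvd_gcd fun i hi =>
    orderOf_dvd_of_pow_eq_one <| by
      rw [← QuotientGroup.mk_pow, QuotientGroup.eq_one_iff]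
      exact h i hi
  rw [← QuotientGroup.eq_one_iff, QuotientGroup.mk_pow]
  exact orderOf_dvd_iff_pow_eq_one.mp hdvd

theorem eq_of_forall_pow_eq_of_gcd_eq_one {G ι : Type*} [CommGroup G] {s : Finset ι}
    {b : ι → ℕ} (hb : s.gcd b = 1) {x y : G} (h : ∀ i ∈ s, x ^ b i = y ^ b i) : x = y := by
  have := pow_gcd_mem_of_forall_pow_mem (H := ⊥) (x := x / y) (s := s) (a := b)
    fun i hi => by rw [Subgroup.mem_bot, div_pow, h i hi, div_self']
  rwa [hb, pow_one, Subgroup.mem_bot, div_eq_one] at this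

theorem Nat.card_eq_card_mul_of_card_fiber {α β : Type*} [Finite α] [Finite β] (f : α → β)
    {m : ℕ} (hf : ∀ b, Nat.card {x // f x = b} = m) : Nat.card α = Nat.card β * m := by
  have := Fintype.ofFinite β
  rw [← Nat.card_congr (Equiv.sigmaFiberEquiv f), Nat.card_sigma]
  simp [hf, Nat.card_eq_fintype_card]

def wsmul {K : Type*} [Monoid K] {n : ℕ} (b : Fin (n + 1) → ℕ) (t : K) (x : Fin (n + 1) → K) :
    Fin (n + 1) → K :=
  fun i => t ^ b i * x i

theorem wcls_eq_wcls_iff {K : Type} [Field K] {n : ℕ} {a : Fin (n + 1) → ℕ}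
    {x y : Fin (n + 1) → K} : wcls a x = wcls a y ↔ ∃ lam : Kˣ, wsmul a (lam : K) x = y := by
  simp only [funext_iff]
  exact Quotient.eq

section Representatives

variable {F : Type} [Field F] {n : ℕ}

theorem liftv_injective : Function.Injective (liftv F n) :=
  fun _ _ h => funext fun k => (algebraMap F _).injective (congrFun h k)

theorem liftv_ne_zero {y : Fin (n + 1) → F} (hy : y ≠ 0) : liftv F n y ≠ 0 :=
  fun h => hy (liftv_injective (h.trans (by ext; simp [liftv])))

theorem liftv_wsmul (b : Fin (n + 1) → ℕ) (t : F) (y : Fin (n + 1) → F) :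
    liftv F n (wsmul b t y) = wsmul b (algebraMap F _ t) (liftv F n y) := by
  ext; simp [liftv, wsmul]

theorem liftv_pow_card [Fintype F] (y : Fin (n + 1) → F) :
    (fun k => liftv F n y k ^ Fintype.card F) = liftv F n y := by
  ext; simp only [liftv, ← map_pow, FiniteField.pow_card]

open Classical in
def supportGcd (a : Fin (n + 1) → ℕ) (y : Fin (n + 1) → F) : ℕ :=
  (Finset.univ.filter fun i => y i ≠ 0).gcd a

def reducedWeights (a : Fin (n + 1) → ℕ) (y : Fin (n + 1) → F) : Fin (n + 1) → ℕ :=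
  fun i => a i / supportGcd a y

variable {a : Fin (n + 1) → ℕ} {y₀ : Fin (n + 1) → F}

theorem supportGcd_pos (ha : ∀ i, 0 < a i) (hy₀ : y₀ ≠ 0) : 0 < supportGcd a y₀ := by
  obtain ⟨i, hi⟩ := Function.ne_iff.mp hy₀
  refine Nat.pos_of_ne_zero fun h => (ha i).ne' ?_
  exact Finset.gcd_eq_zero_iff.mp h i (by simpa using hi)

theorem supportGcd_mul_reducedWeights {i : Fin (n + 1)} (hi : y₀ i ≠ 0) :
    supportGcd a y₀ * reducedWeights a y₀ i = a i :=
  Nat.mul_div_cancel' (Finset.gcd_dvd (by simpa using hi))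

open Classical in
theorem gcd_reducedWeights (ha : ∀ i, 0 < a i) (hy₀ : y₀ ≠ 0) :
    (Finset.univ.filter fun i => y₀ i ≠ 0).gcd (reducedWeights a y₀) = 1 := by
  obtain ⟨i, hi⟩ := Function.ne_iff.mp hy₀
  exact Finset.gcd_div_eq_one (s := Finset.univ.filter fun i => y₀ i ≠ 0) (f := a)
    (by simpa using hi) (ha i).ne'

theorem wsmul_liftv_of_pow_supportGcd {μ : AlgebraicClosure F} {t : F}
    (hμ : μ ^ supportGcd a y₀ = algebraMap F _ t) :
    wsmul a μ (liftv F n y₀) = liftv F n (wsmul (reducedWeights a y₀) t y₀) := by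
  ext i
  by_cases hi : y₀ i = 0
  · simp [wsmul, liftv, hi]
  · rw [liftv_wsmul, wsmul, wsmul, ← hμ, ← pow_mul, supportGcd_mul_reducedWeights hi]

theorem pow_supportGcd_mem_range {lam : (AlgebraicClosure F)ˣ} {y : Fin (n + 1) → F}
    (h : wsmul a (lam : AlgebraicClosure F) (liftv F n y₀) = liftv F n y) :
    lam ^ supportGcd a y₀ ∈ (Units.map (algebraMap F (AlgebraicClosure F) : F →* _)).range := by
  refine pow_gcd_mem_of_forall_pow_mem fun i hi => ?_
  have hy₀i : y₀ i ≠ 0 := by simpa using hi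
  have hval : algebraMap F (AlgebraicClosure F) (y i / y₀ i) = ↑(lam ^ a i) := by
    rw [map_div₀, div_eq_iff ((map_ne_zero _).mpr hy₀i), Units.val_pow_eq_pow_val]
    exact (congrFun h i).symm
  refine ⟨Units.mk0 _ fun h0 => (lam ^ a i).ne_zero ?_, Units.ext hval⟩
  rw [← hval, h0, map_zero]

theorem wcls_liftv_eq_iff (ha : ∀ i, 0 < a i) (hy₀ : y₀ ≠ 0) {y : Fin (n + 1) → F} :
    wcls a (liftv F n y₀) = wcls a (liftv F n y) ↔
      ∃ t : Fˣ, wsmul (reducedWeights a y₀) (t : F) y₀ = y := by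
  rw [wcls_eq_wcls_iff]
  constructor
  · rintro ⟨lam, hlam⟩
    obtain ⟨t, ht⟩ := pow_supportGcd_mem_range hlam
    have hμ : (lam : AlgebraicClosure F) ^ supportGcd a y₀ = algebraMap F _ t := by
      rw [← Units.val_pow_eq_pow_val, ← ht]
      rfl
    exact ⟨t, liftv_injective (by rw [← hlam, wsmul_liftv_of_pow_supportGcd hμ])⟩
  · rintro ⟨t, rfl⟩
    obtain ⟨μ, hμ⟩ := IsAlgClosed.exists_pow_nat_eq (algebraMap F (AlgebraicClosure F) t)
      (supportGcd_pos ha hy₀)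
    have hμ₀ : μ ≠ 0 := by
      rintro rfl
      rw [zero_pow (supportGcd_pos ha hy₀).ne', eq_comm, map_eq_zero] at hμ
      exact t.ne_zero hμ
    exact ⟨Units.mk0 μ hμ₀, wsmul_liftv_of_pow_supportGcd hμ⟩

theorem wsmul_reducedWeights_injective (ha : ∀ i, 0 < a i) (hy₀ : y₀ ≠ 0) :
    Function.Injective fun t : Fˣ => wsmul (reducedWeights a y₀) (t : F) y₀ := by
  classical
  refine fun t t' h => eq_of_forall_pow_eq_of_gcd_eq_one (gcd_reducedWeights ha hy₀)
    fun i hi => Units.ext ?_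
  have hy₀i : y₀ i ≠ 0 := by simpa using hi
  simpa [wsmul, hy₀i] using congrFun h i

theorem card_liftv_representatives [Fintype F] (ha : ∀ i, 0 < a i) (hy₀ : y₀ ≠ 0) :
    Nat.card {y : Fin (n + 1) → F // y ≠ 0 ∧ wcls a (liftv F n y) = wcls a (liftv F n y₀)} =
      Fintype.card F - 1 := by
  classical
  rw [← Fintype.card_units, ← Nat.card_eq_fintype_card]
  have hne (t : Fˣ) : wsmul (reducedWeights a y₀) (t : F) y₀ ≠ 0 := fun h =>
    hy₀ (funext fun i => by simpa [wsmul] using congrFun h i)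
  have hrep (t : Fˣ) :
      wcls a (liftv F n (wsmul (reducedWeights a y₀) (t : F) y₀)) = wcls a (liftv F n y₀) :=
    ((wcls_liftv_eq_iff ha hy₀).mpr ⟨t, rfl⟩).symm
  refine (Nat.card_eq_of_bijective (fun t => ⟨_, hne t, hrep t⟩)
    ⟨fun t t' h => wsmul_reducedWeights_injective ha hy₀ (congrArg Subtype.val h), ?_⟩).symm
  rintro ⟨y, -, hy⟩
  obtain ⟨t, rfl⟩ := (wcls_liftv_eq_iff ha hy₀).mp hy.symm
  exact ⟨t, rfl⟩

end Representatives

section RationalPoints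

variable {F : Type} [Field F] [Fintype F] {n : ℕ} {a : Fin (n + 1) → ℕ}

theorem wcls_liftv_mem_ratPts {y : Fin (n + 1) → F} (hy : y ≠ 0) :
    wcls a (liftv F n y) ∈ RatPts F n a := by
  refine ⟨⟨_, liftv_ne_zero hy, rfl⟩, fun x hx => ?_⟩
  obtain ⟨lam, hlam⟩ := wcls_eq_wcls_iff.mp hx
  refine wcls_eq_wcls_iff.mpr ⟨lam ^ Fintype.card F, ?_⟩
  rw [← liftv_pow_card, ← hlam]
  ext k
  simp only [wsmul, Units.val_pow_eq_pow_val, mul_pow, ← pow_mul, mul_comm]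

theorem exists_liftv_eq_of_mem_ratPts {P : WP (AlgebraicClosure F) n a}
    (hP : P ∈ RatPts F n a) : ∃ y : Fin (n + 1) → F, y ≠ 0 ∧ wcls a (liftv F n y) = P := by
  obtain ⟨⟨x, hx₀, rfl⟩, hfrob⟩ := hP
  obtain ⟨lam, hlam⟩ := wcls_eq_wcls_iff.mp (hfrob x rfl)
  obtain ⟨m, hm⟩ : ∃ m, Fintype.card F = m + 1 := Nat.exists_eq_add_one.mpr Fintype.card_pos
  have hm₀ : m ≠ 0 := by have := Fintype.one_lt_card (α := F); omega
  obtain ⟨ν, hν⟩ :=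
    IsAlgClosed.exists_pow_nat_eq (lam : AlgebraicClosure F) (Nat.pos_of_ne_zero hm₀)
  have hν₀ : ν ≠ 0 := by
    rintro rfl
    exact lam.ne_zero (by rw [← hν, zero_pow hm₀])
  have hfix (k : Fin (n + 1)) : (ν ^ a k * x k) ^ Fintype.card F = ν ^ a k * x k :=
    calc (ν ^ a k * x k) ^ Fintype.card F = ν ^ a k * ((ν ^ m) ^ a k * x k ^ (m + 1)) := by
          rw [hm]; ring
      _ = ν ^ a k * x k := by rw [hν, ← hm]; exact congrArg _ (congrFun hlam k)
  choose y hy using fun k => mem_range_algebraMap_of_pow_card_eq_self (hfix k)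
  have hyx : liftv F n y = wsmul a ν x := funext hy
  refine ⟨y, fun hy₀ => hx₀ (funext fun k => ?_), ?_⟩
  · simpa [hy₀, liftv, wsmul, hν₀] using (congrFun hyx k).symm
  · rw [hyx]
    exact (wcls_eq_wcls_iff.mpr ⟨Units.mk0 ν hν₀, rfl⟩).symm

theorem card_representatives_of_mem_ratPts (ha : ∀ i, 0 < a i)
    {P : WP (AlgebraicClosure F) n a} (hP : P ∈ RatPts F n a) :
    Nat.card {y : Fin (n + 1) → F // y ≠ 0 ∧ wcls a (liftv F n y) = P} = Fintype.card F - 1 := by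
  obtain ⟨y₀, hy₀, rfl⟩ := exists_liftv_eq_of_mem_ratPts hP
  exact card_liftv_representatives ha hy₀

theorem card_ratPts_mul_card_sub_one (ha : ∀ i, 0 < a i) :
    Nat.card (RatPts F n a) * (Fintype.card F - 1) = Fintype.card F ^ (n + 1) - 1 := by
  let cls (y : {y : Fin (n + 1) → F // y ≠ 0}) : RatPts F n a := ⟨_, wcls_liftv_mem_ratPts y.2⟩
  have hcls : Function.Surjective cls := fun ⟨_, hP⟩ =>
    let ⟨y, hy, hyP⟩ := exists_liftv_eq_of_mem_ratPts hP
    ⟨⟨y, hy⟩, Subtype.ext hyP⟩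
  have := Finite.of_surjective cls hcls
  have hfiber (P : RatPts F n a) : Nat.card {y // cls y = P} = Fintype.card F - 1 :=
    (Nat.card_congr ((Equiv.subtypeEquivRight fun _ => Subtype.ext_iff).trans
      (Equiv.subtypeSubtypeEquivSubtypeInter (· ≠ 0) fun y => wcls a (liftv F n y) = P))).trans
      (card_representatives_of_mem_ratPts ha P.2)
  have hnonzero : Nat.card {y : Fin (n + 1) → F // y ≠ 0} = Fintype.card F ^ (n + 1) - 1 := by
    classical
    simp [Nat.card_eq_fintype_card]
  rw [← hnonzero, Nat.card_eq_card_mul_of_card_fiber cls hfiber]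

end RationalPoints

/-- Every `𝔽_q`-rational point of `P(a_0, …, a_n)` has exactly `q - 1` representatives in
`𝔽_q^{n+1} ∖ {0}`; consequently the number of `𝔽_q`-rational points is
`p_n = qⁿ + ⋯ + q + 1`. -/
theorem stmt7 (F : Type) [Field F] [Fintype F] (q n : ℕ) (hq : Fintype.card F = q)
    (a : Fin (n + 1) → ℕ) (ha : ∀ i, 0 < a i) :
    (∀ P ∈ RatPts F n a,
      Nat.card {y : Fin (n + 1) → F // y ≠ 0 ∧ wcls a (liftv F n y) = P} = q - 1) ∧
    Nat.card (RatPts F n a) = ∑ k ∈ Finset.range (n + 1), q ^ k := by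
  subst hq
  refine ⟨fun P => card_representatives_of_mem_ratPts ha, ?_⟩
  rw [Nat.geomSum_eq Fintype.one_lt_card, ← card_ratPts_mul_card_sub_one ha,
    Nat.mul_div_cancel _ (Nat.sub_pos_of_lt Fintype.one_lt_card)]
end
end

section
/- Fix i ∈ {0,...,n}, let r_i = gcd(a_i, q-1), and let δ be a generator of F_q^*. For j ∈ {1,...,q-1} define Z_i(j) as the set of F_q-rational points of P(a_0,...,a_n) having a representative whose i-th coordinate equals δ^j. Then Z_i(j_1) = Z_i(j_2) whenever j_1 ≡ j_2 (mod r_i). -/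
noncomputable section

open MvPolynomial

/-! Write `gcd(a_i, q - 1) = u a_i + v (q - 1)`. As `δ^(q-1) = 1`, every `δ^m` with
`gcd(a_i, q - 1) ∣ m` is an `a_i`-th power `μ^(a_i)`, namely `μ = δ^(u m / gcd(a_i, q - 1))`.
Acting on a rational representative by the weight-`a` scaling with `μ` multiplies its `i`-th
coordinate by `μ^(a_i)` and does not move the point, so `Z_i(j)` depends only on `j mod r_i`. -/

theorem Group.exists_pow_eq_zpow_of_gcd_dvd {G : Type*} [Group G] {g : G} {k N : ℕ}
    (hg : g ^ N = 1) {m : ℤ} (hm : (Nat.gcd k N : ℤ) ∣ m) : ∃ μ : G, μ ^ k = g ^ m := by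
  obtain ⟨t, rfl⟩ := hm
  refine ⟨g ^ (Nat.gcdA k N * t), ?_⟩
  have hgN : g ^ (N : ℤ) = 1 := by rw [zpow_natCast, hg]
  rw [Nat.gcd_eq_gcd_ab, ← zpow_natCast, ← zpow_mul, add_mul, zpow_add, mul_assoc (N : ℤ),
    zpow_mul g (N : ℤ), hgN, one_zpow, mul_one]
  ring_nf

theorem FiniteField.exists_pow_eq_zpow_of_gcd_dvd {F : Type*} [Field F] [Fintype F]
    (δ : Fˣ) {k : ℕ} {m : ℤ} (hm : (Nat.gcd k (Fintype.card F - 1) : ℤ) ∣ m) :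
    ∃ μ : Fˣ, μ ^ k = δ ^ m := by
  classical
  exact Group.exists_pow_eq_zpow_of_gcd_dvd
    (by rw [← Fintype.card_units]; exact pow_card_eq_one) hm

theorem wcls_weighted_smul {K : Type} [Field K] {n : ℕ} (a : Fin (n + 1) → ℕ) (lam : Kˣ)
    (x : Fin (n + 1) → K) : wcls a (fun k => (lam : K) ^ a k * x k) = wcls a x :=
  have hrel : (wSetoid K n a).r x (fun k => (lam : K) ^ a k * x k) := ⟨lam, fun _ => rfl⟩
  (Quotient.sound hrel).symm

theorem Zset_subset_Zset_pow_mul (F : Type) [Field F] [Fintype F] (n : ℕ)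
    (a : Fin (n + 1) → ℕ) (i : Fin (n + 1)) (μ : Fˣ) (c : F) :
    Zset F n a i c ⊆ Zset F n a i ((μ : F) ^ a i * c) := by
  rintro P ⟨y, hy0, hyi, rfl⟩
  refine ⟨fun k => (μ : F) ^ a k * y k, ?_, by simp only [hyi], ?_⟩
  · intro h
    exact hy0 (funext fun k => (mul_eq_zero.mp (congrFun h k)).resolve_left (by simp))
  · have hlift : liftv F n (fun k => (μ : F) ^ a k * y k)
        = fun k => ((Units.map (algebraMap F (AlgebraicClosure F) : F →* _) μ :
            (AlgebraicClosure F)ˣ) : AlgebraicClosure F) ^ a k * liftv F n y k := by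
      funext k
      simp [liftv]
    rw [hlift, wcls_weighted_smul]

theorem Zset_pow_mul (F : Type) [Field F] [Fintype F] (n : ℕ)
    (a : Fin (n + 1) → ℕ) (i : Fin (n + 1)) (μ : Fˣ) (c : F) :
    Zset F n a i ((μ : F) ^ a i * c) = Zset F n a i c := by
  refine (Set.Subset.antisymm (Zset_subset_Zset_pow_mul F n a i μ c) ?_).symm
  calc Zset F n a i ((μ : F) ^ a i * c)
      ⊆ Zset F n a i ((↑μ⁻¹ : F) ^ a i * ((μ : F) ^ a i * c)) :=
        Zset_subset_Zset_pow_mul F n a i μ⁻¹ _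
    _ = Zset F n a i c := by rw [← mul_assoc, ← mul_pow, Units.inv_mul, one_pow, one_mul]

theorem stmt8_general (F : Type) [Field F] [Fintype F] (q n : ℕ) (hq : Fintype.card F = q)
    (a : Fin (n + 1) → ℕ) (i : Fin (n + 1)) (δ : Fˣ)
    (r : ℕ) (hr : r = Nat.gcd (a i) (q - 1)) (j₁ j₂ : ℕ)
    (hcong : j₁ ≡ j₂ [MOD r]) :
    Zset F n a i ((δ : F) ^ j₁) = Zset F n a i ((δ : F) ^ j₂) := by
  subst hr hq
  obtain ⟨μ, hμ⟩ := FiniteField.exists_pow_eq_zpow_of_gcd_dvd δ hcong.dvd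
  have hδ : (δ : F) ^ j₂ = (μ : F) ^ a i * (δ : F) ^ j₁ := by
    have hsplit : δ ^ (j₂ : ℤ) = μ ^ a i * δ ^ (j₁ : ℤ) := by
      rw [hμ, ← zpow_add, sub_add_cancel]
    simpa using congrArg Units.val hsplit
  rw [hδ, Zset_pow_mul]

/-- `Z_i(j₁) = Z_i(j₂)` whenever `j₁ ≡ j₂ (mod r_i)`, where `r_i = gcd (a_i, q - 1)` and
`Z_i(j)` is the set of rational points with a representative having `i`-th coordinate
`δ^j`, `δ` a generator of `𝔽_qˣ`. -/
theorem stmt8 (F : Type) [Field F] [Fintype F] (q n : ℕ) (hq : Fintype.card F = q)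
    (a : Fin (n + 1) → ℕ) (ha : ∀ i, 0 < a i) (i : Fin (n + 1))
    (δ : Fˣ) (hδ : ∀ z : Fˣ, z ∈ Subgroup.zpowers δ)
    (r : ℕ) (hr : r = Nat.gcd (a i) (q - 1))
    (j₁ j₂ : ℕ) (hj₁ : 1 ≤ j₁ ∧ j₁ ≤ q - 1) (hj₂ : 1 ≤ j₂ ∧ j₂ ≤ q - 1)
    (hcong : j₁ ≡ j₂ [MOD r]) :
    Zset F n a i ((δ : F) ^ j₁) = Zset F n a i ((δ : F) ^ j₂) :=
  stmt8_general F q n hq a i δ r hr j₁ j₂ hcong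

end
end

section
/- Let F be a weighted homogeneous polynomial over F_q of weighted degree d for weights (a_0,...,a_n), δ a generator of F_q^*, σ_i the automorphism of P(a_0,...,a_n) multiplying the i-th coordinate by δ, r_i = gcd(a_i, q-1), and π_i^*G(X) = G(X_0,...,X_i^{a_i},...,X_n). Then the number N(F) of F_q-points of the hypersurface V(F) in P(a_0,...,a_n) satisfies N(F) ≤ (1/r_i) Σ_{j=0}^{r_i-1} N(π_i^*(F ∘ σ_i^j)), where N(π_i^*(F∘σ_i^j)) counts F_q-points of the corresponding hypersurface in P(a_0,...,a_{i-1},1,a_{i+1},...,a_n). -/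
noncomputable section

open MvPolynomial

/-!
Count affine points. Every `𝔽_q`-point of `P(a)` has exactly `q - 1` nonzero `𝔽_q`-rational
representatives: if `λ·y` is rational then `λ^g ∈ 𝔽_q` for `g` the gcd of the weights on the
support of `y`, and `λ·y` only depends on `λ^g`. Hence `(q - 1) N(F)` is the number of nonzero
affine zeros of `F` (all representatives of a zero are zeros by homogeneity), and `(q - 1) N(G)`
bounds that number for any `G`. The affine zeros of `π_i^*(F ∘ σ_i^j)` are the `z` for which
`z` with `z_i` replaced by `δ^j z_i^{a_i}` is a zero of `F`. Finally, every `c ∈ 𝔽_q` is hit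
at least `r` times by the maps `x ↦ δ^j x^{a_i}`, `j < r`: the `a_i`-th powers form the subgroup
of index `r` of the cyclic group `𝔽_qˣ`, with coset representatives `δ^j`, and `x ↦ x^{a_i}` is
`r`-to-one on it.
-/

open Finset

theorem Finset.pow_gcd_eq_one_iff {M ι : Type*} [Monoid M] (x : M) (s : Finset ι) (f : ι → ℕ) :
    x ^ s.gcd f = 1 ↔ ∀ i ∈ s, x ^ f i = 1 := by
  classical
  induction s using Finset.induction_on with
  | empty => simp
  | insert j s hj ih =>
    rw [Finset.gcd_insert, forall_mem_insert, ← ih]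
    exact pow_gcd_eq_one

theorem Subgroup.pow_finset_gcd_mem_iff {G ι : Type*} [CommGroup G] (H : Subgroup G) (x : G)
    (s : Finset ι) (f : ι → ℕ) : x ^ s.gcd f ∈ H ↔ ∀ i ∈ s, x ^ f i ∈ H := by
  simpa only [← QuotientGroup.eq_one_iff, QuotientGroup.mk_pow] using
    Finset.pow_gcd_eq_one_iff (x : G ⧸ H) s f

section CyclicGroup

variable {G : Type*} [CommGroup G] [Finite G] {δ : G}

theorem exists_lt_gcd_mul_pow_eq (hδ : ∀ z : G, z ∈ Subgroup.zpowers δ) (a : ℕ) (c : G) :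
    ∃ j < a.gcd (Nat.card G), ∃ x : G, δ ^ j * x ^ a = c := by
  set r := a.gcd (Nat.card G)
  have hr : 0 < r := Nat.gcd_pos_of_pos_right _ Nat.card_pos
  obtain ⟨s, rfl⟩ := mem_powers_iff_mem_zpowers.mpr (hδ c)
  have hδr : δ ^ r ∈ (powMonoidHom a : G →* G).range := by
    -- modulo the `a`-th powers, both `δ ^ a` and `δ ^ |G|` are trivial
    rw [← QuotientGroup.eq_one_iff, QuotientGroup.mk_pow, pow_gcd_eq_one]
    refine ⟨?_, ?_⟩
    · rw [← QuotientGroup.mk_pow, QuotientGroup.eq_one_iff]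
      exact ⟨δ, rfl⟩
    · rw [← QuotientGroup.mk_pow, pow_card_eq_one', QuotientGroup.mk_one]
  obtain ⟨y, hy⟩ := hδr
  refine ⟨s % r, Nat.mod_lt _ hr, y ^ (s / r), ?_⟩
  simp only [powMonoidHom_apply] at hy
  rw [pow_right_comm, hy, ← pow_mul, ← pow_add, Nat.mod_add_div]

theorem IsCyclic.card_pow_eq_pow [IsCyclic G] (a : ℕ) (y : G) :
    Nat.card {x : G // x ^ a = y ^ a} = (Nat.card G).gcd a := by
  rw [← IsCyclic.card_powMonoidHom_ker]
  refine Nat.card_congr (Equiv.subtypeEquiv (Equiv.mulRight y⁻¹) fun x => ?_)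
  simp [MonoidHom.mem_ker, div_pow, div_eq_one, ← div_eq_mul_inv]

end CyclicGroup

theorem gcd_le_sum_card_mul_pow_eq {F : Type*} [Field F] [Fintype F] [DecidableEq F] {δ : Fˣ}
    (hδ : ∀ z : Fˣ, z ∈ Subgroup.zpowers δ) {a : ℕ} (ha : 0 < a) (c : F) :
    a.gcd (Fintype.card F - 1) ≤
      ∑ j ∈ range (a.gcd (Fintype.card F - 1)), #{x : F | (δ : F) ^ j * x ^ a = c} := by
  set r := a.gcd (Fintype.card F - 1)
  have hcard : Nat.card Fˣ = Fintype.card F - 1 := by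
    rw [Nat.card_eq_fintype_card, Fintype.card_units]
  rcases eq_or_ne c 0 with rfl | hc
  · calc r = ∑ _j ∈ range r, 1 := by rw [sum_const, card_range, smul_eq_mul, mul_one]
      _ ≤ ∑ j ∈ range r, #{x : F | (δ : F) ^ j * x ^ a = 0} :=
        sum_le_sum fun j _ => one_le_card.mpr ⟨0, by simp [ha.ne']⟩
  obtain ⟨j, hj, x₀, hx₀⟩ := exists_lt_gcd_mul_pow_eq hδ a (Units.mk0 c hc)
  rw [hcard] at hj
  refine le_trans ?_ (single_le_sum (fun _ _ => Nat.zero_le _) (mem_range.mpr hj))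
  calc r = Nat.card {x : Fˣ // x ^ a = x₀ ^ a} := by rw [IsCyclic.card_pow_eq_pow, hcard, Nat.gcd_comm]
    _ ≤ Nat.card {x : F // (δ : F) ^ j * x ^ a = c} := by
      refine Nat.card_le_card_of_injective (fun x => ⟨x.1, ?_⟩) fun x y h => ?_
      · rw [← Units.val_pow_eq_pow_val x.1, x.2, ← Units.val_pow_eq_pow_val, ← Units.val_mul, hx₀,
          Units.val_mk0]
      · exact Subtype.ext (Units.ext (congrArg Subtype.val h))
    _ = #{x : F | (δ : F) ^ j * x ^ a = c} := by
      rw [Nat.card_eq_fintype_card, Fintype.card_subtype]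

theorem card_filter_update_apply_eq {ι α : Type*} [Fintype ι] [DecidableEq ι] [Fintype α]
    [DecidableEq α] (i : ι) (f : α → α) (y : ι → α) :
    #{z : ι → α | Function.update z i (f (z i)) = y} = #{x | f x = y i} := by
  refine card_nbij' (· i) (Function.update y i) (fun z hz => ?_) (fun x hx => ?_)
    (fun z hz => ?_) (fun x _ => Function.update_self ..)
  · simp only [coe_filter, mem_univ, true_and, Set.mem_ofPred_eq] at hz ⊢
    simpa using congrFun hz i
  · simp only [coe_filter, mem_univ, true_and, Set.mem_ofPred_eq] at hx ⊢
    rw [Function.update_self, Function.update_idem, hx, Function.update_eq_self]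
  · simp only [coe_filter, mem_univ, true_and, Set.mem_ofPred_eq] at hz
    rw [← hz, Function.update_idem, Function.update_eq_self]

theorem mul_card_le_sum_card_update_mem {ι α κ : Type*} [Fintype ι] [DecidableEq ι] [Fintype α]
    [DecidableEq α] (S : Finset (ι → α)) (i : ι) (f : κ → α → α) (J : Finset κ) {r : ℕ}
    (hf : ∀ c, r ≤ ∑ j ∈ J, #{x | f j x = c}) :
    r * #S ≤ ∑ j ∈ J, #{z | Function.update z i (f j (z i)) ∈ S} := by
  have hfiber (j : κ) : #{z | Function.update z i (f j (z i)) ∈ S} =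
      ∑ y ∈ S, #{z : ι → α | Function.update z i (f j (z i)) = y} := by
    refine (card_eq_sum_card_fiberwise (f := fun z => Function.update z i (f j (z i))) (t := S)
      fun z hz => ?_).trans (sum_congr rfl fun y hy => ?_)
    · simpa using hz
    rw [filter_filter]
    exact congrArg card (filter_congr fun z _ => ⟨And.right, fun h => ⟨h ▸ hy, h⟩⟩)
  calc r * #S = ∑ _y ∈ S, r := by rw [sum_const, smul_eq_mul, mul_comm]
    _ ≤ ∑ y ∈ S, ∑ j ∈ J, #{x | f j x = y i} := sum_le_sum fun y _ => hf (y i)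
    _ = ∑ j ∈ J, #{z | Function.update z i (f j (z i)) ∈ S} := by
      simp_rw [hfiber, card_filter_update_apply_eq]
      exact sum_comm

section WeightedProjective

open scoped Classical

variable {F : Type} [Field F] {n : ℕ}

theorem eval_liftv_map (y : Fin (n + 1) → F) (p : MvPolynomial (Fin (n + 1)) F) :
    eval (liftv F n y) (map (algebraMap F (AlgebraicClosure F)) p) =
      algebraMap F (AlgebraicClosure F) (eval y p) := by
  rw [eval_map, eval, coe_eval₂Hom, eval₂_comp_left]
  rfl

theorem eval_pistar_sigmaPoly (a : Fin (n + 1) → ℕ) (i : Fin (n + 1)) (c : F) (j : ℕ)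
    (Fp : MvPolynomial (Fin (n + 1)) F) (z : Fin (n + 1) → F) :
    eval z (pistar F n a i (sigmaPoly F n i c j Fp)) =
      eval (Function.update z i (c ^ j * z i ^ a i)) Fp := by
  rw [pistar, sigmaPoly, eval, eval₂Hom_bind₁, eval₂Hom_bind₁]
  congr 2
  funext k
  rcases eq_or_ne k i with rfl | hk
  · simp
  · simp [hk]

def weightGcd (a : Fin (n + 1) → ℕ) (y : Fin (n + 1) → F) : ℕ :=
  ({k | y k ≠ 0} : Finset (Fin (n + 1))).gcd a

theorem weightGcd_dvd {a : Fin (n + 1) → ℕ} {y : Fin (n + 1) → F} {k : Fin (n + 1)}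
    (hk : y k ≠ 0) : weightGcd a y ∣ a k :=
  Finset.gcd_dvd (by simpa using hk)

theorem weightGcd_ne_zero {a : Fin (n + 1) → ℕ} (ha : ∀ k, 0 < a k) {y : Fin (n + 1) → F}
    (hy : y ≠ 0) : weightGcd a y ≠ 0 := by
  obtain ⟨k, hk⟩ := Function.ne_iff.mp hy
  exact fun h => (ha k).ne' (Finset.gcd_eq_zero_iff.mp h k (by simpa using hk))

/-- As `u` runs over `𝔽_qˣ`, these are the `𝔽_q`-rational representatives of the point of `y`
(`card_wcls_liftv_eq`). -/
def unitRescale (a : Fin (n + 1) → ℕ) (y : Fin (n + 1) → F) (u : Fˣ) : Fin (n + 1) → F :=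
  fun k => (u : F) ^ (a k / weightGcd a y) * y k

theorem exists_unitRescale_of_wcls_eq {a : Fin (n + 1) → ℕ} {y w : Fin (n + 1) → F}
    (h : wcls a (liftv F n w) = wcls a (liftv F n y)) : ∃ u : Fˣ, unitRescale a y u = w := by
  set φ := algebraMap F (AlgebraicClosure F)
  obtain ⟨lam, hlam⟩ := Quotient.exact h.symm
  change ∀ k, (lam : AlgebraicClosure F) ^ a k * φ (y k) = φ (w k) at hlam
  have hmem : ∀ k ∈ ({k | y k ≠ 0} : Finset (Fin (n + 1))),
      lam ^ a k ∈ (Units.map φ.toMonoidHom).range := by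
    intro k hk
    have hyk : y k ≠ 0 := (mem_filter.mp hk).2
    have hwk : w k ≠ 0 := by
      intro h0
      have hk := hlam k
      rw [h0, map_zero] at hk
      exact mul_ne_zero (pow_ne_zero _ lam.ne_zero) ((map_ne_zero φ).mpr hyk) hk
    refine ⟨Units.mk0 (w k) hwk / Units.mk0 (y k) hyk, Units.ext ?_⟩
    simp [← hlam k, φ, hyk]
  obtain ⟨u, hu⟩ := (Subgroup.pow_finset_gcd_mem_iff _ lam _ a).mpr hmem
  have hu' : φ u = (lam : AlgebraicClosure F) ^ weightGcd a y := congrArg Units.val hu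
  refine ⟨u, funext fun k => φ.injective ?_⟩
  rw [← hlam k, unitRescale, map_mul, map_pow, hu']
  rcases eq_or_ne (y k) 0 with hk | hk
  · simp [hk]
  · rw [← pow_mul, Nat.mul_div_cancel' (weightGcd_dvd hk)]

theorem wcls_unitRescale {a : Fin (n + 1) → ℕ} {y : Fin (n + 1) → F} (hg : weightGcd a y ≠ 0)
    (u : Fˣ) : wcls a (liftv F n (unitRescale a y u)) = wcls a (liftv F n y) := by
  set φ := algebraMap F (AlgebraicClosure F)
  obtain ⟨μ, hμ⟩ := IsAlgClosed.exists_pow_nat_eq (φ u) (Nat.pos_of_ne_zero hg)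
  have hμ0 : μ ≠ 0 := by
    rintro rfl
    exact (map_ne_zero φ).mpr u.ne_zero (by rw [← hμ, zero_pow hg])
  refine (Quotient.sound (show (wSetoid _ n a).r (liftv F n y) (liftv F n (unitRescale a y u))
    from ⟨Units.mk0 μ hμ0, fun k => ?_⟩)).symm
  change μ ^ a k * φ (y k) = φ ((u : F) ^ (a k / weightGcd a y) * y k)
  rw [map_mul, map_pow, ← hμ]
  rcases eq_or_ne (y k) 0 with hk | hk
  · simp [hk]
  · rw [← pow_mul, Nat.mul_div_cancel' (weightGcd_dvd hk)]

theorem unitRescale_injective {a : Fin (n + 1) → ℕ} (ha : ∀ k, 0 < a k) {y : Fin (n + 1) → F}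
    (hy : y ≠ 0) : Function.Injective (unitRescale a y) := by
  intro u v h
  obtain ⟨k₀, hk₀⟩ := Function.ne_iff.mp hy
  have hpow : ∀ k ∈ ({k | y k ≠ 0} : Finset (Fin (n + 1))),
      (u / v) ^ (a k / weightGcd a y) = 1 := by
    intro k hk
    rw [div_pow, div_eq_one]
    exact Units.ext (mul_right_cancel₀ (mem_filter.mp hk).2 (congrFun h k))
  have h1 := (Finset.pow_gcd_eq_one_iff (u / v) _ _).mpr hpow
  rwa [weightGcd, Finset.gcd_div_eq_one (by simpa using hk₀) (ha k₀).ne', pow_one, div_eq_one] at h1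

theorem unitRescale_ne_zero {a : Fin (n + 1) → ℕ} {y : Fin (n + 1) → F} (hy : y ≠ 0) (u : Fˣ) :
    unitRescale a y u ≠ 0 := by
  obtain ⟨k, hk⟩ := Function.ne_iff.mp hy
  exact Function.ne_iff.mpr ⟨k, mul_ne_zero (pow_ne_zero _ u.ne_zero) hk⟩

variable [Fintype F]

theorem card_wcls_liftv_eq {a : Fin (n + 1) → ℕ} (ha : ∀ k, 0 < a k)
    {y : Fin (n + 1) → F} (hy : y ≠ 0) :
    #{w | wcls a (liftv F n w) = wcls a (liftv F n y)} = Fintype.card F - 1 := by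
  rw [← Fintype.card_units, ← Fintype.card_subtype]
  refine (Fintype.card_congr (Equiv.ofBijective
    (fun u => ⟨unitRescale a y u, wcls_unitRescale (weightGcd_ne_zero ha hy) u⟩) ⟨?_, ?_⟩)).symm
  · exact fun u v h => unitRescale_injective ha hy (congrArg Subtype.val h)
  · rintro ⟨w, hw⟩
    obtain ⟨u, rfl⟩ := exists_unitRescale_of_wcls_eq hw
    exact ⟨u, rfl⟩

theorem eval_eq_zero_of_wcls_eq {a : Fin (n + 1) → ℕ}
    {Fp : MvPolynomial (Fin (n + 1)) F} {d : ℕ} (hF : WHomog F n a Fp d)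
    {y w : Fin (n + 1) → F} (h : wcls a (liftv F n w) = wcls a (liftv F n y))
    (hy : eval y Fp = 0) : eval w Fp = 0 := by
  obtain ⟨lam, hlam⟩ := Quotient.exact h.symm
  have hscale := hF lam (liftv F n y)
  rw [show (fun k => (lam : AlgebraicClosure F) ^ a k * liftv F n y k) = liftv F n w from
    funext hlam, eval_liftv_map, eval_liftv_map, hy, map_zero, mul_zero] at hscale
  exact (map_eq_zero _).mp hscale

def affineZeros (Fp : MvPolynomial (Fin (n + 1)) F) : Finset (Fin (n + 1) → F) :=
  {y | y ≠ 0 ∧ eval y Fp = 0}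

theorem card_VRat (a : Fin (n + 1) → ℕ) (Fp : MvPolynomial (Fin (n + 1)) F) :
    Nat.card (VRat F n a Fp) = #((affineZeros Fp).image fun y => wcls a (liftv F n y)) := by
  rw [← Nat.card_eq_finsetCard]
  congr
  ext P
  simp [VRat, affineZeros, and_assoc]

theorem card_affineZeros_le {a : Fin (n + 1) → ℕ} (ha : ∀ k, 0 < a k)
    (Fp : MvPolynomial (Fin (n + 1)) F) :
    #(affineZeros Fp) ≤ (Fintype.card F - 1) * Nat.card (VRat F n a Fp) := by
  rw [card_VRat]
  refine card_le_mul_card_image _ _ fun P hP => ?_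
  obtain ⟨y, hy, rfl⟩ := mem_image.mp hP
  rw [← card_wcls_liftv_eq ha (mem_filter.mp hy).2.1]
  exact card_le_card (filter_subset_filter _ (subset_univ _))

theorem mul_card_VRat_le {a : Fin (n + 1) → ℕ} (ha : ∀ k, 0 < a k)
    {Fp : MvPolynomial (Fin (n + 1)) F} {d : ℕ} (hF : WHomog F n a Fp d) :
    (Fintype.card F - 1) * Nat.card (VRat F n a Fp) ≤ #(affineZeros Fp) := by
  rw [card_VRat]
  refine mul_card_image_le_card _ _ fun P hP => ?_
  obtain ⟨y, hy, rfl⟩ := mem_image.mp hP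
  obtain ⟨hy0, hyF⟩ := (mem_filter.mp hy).2
  rw [← card_wcls_liftv_eq ha hy0]
  refine card_le_card fun w hw => ?_
  have hw := (mem_filter.mp hw).2
  obtain ⟨u, rfl⟩ := exists_unitRescale_of_wcls_eq hw
  simp [affineZeros, unitRescale_ne_zero hy0, eval_eq_zero_of_wcls_eq hF hw hyF, hw]

theorem affineZeros_pistar_sigmaPoly {a : Fin (n + 1) → ℕ} {i : Fin (n + 1)}
    (ha : 0 < a i) {c : F} (hc : c ≠ 0) (j : ℕ) (Fp : MvPolynomial (Fin (n + 1)) F) :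
    affineZeros (pistar F n a i (sigmaPoly F n i c j Fp)) =
      ({z | Function.update z i (c ^ j * z i ^ a i) ∈ affineZeros Fp} : Finset _) := by
  have hzero (z : Fin (n + 1) → F) : Function.update z i (c ^ j * z i ^ a i) = 0 ↔ z = 0 := by
    refine ⟨fun h => funext fun k => ?_, fun h => by simp [h, ha.ne']⟩
    have hk := congrFun h k
    rcases eq_or_ne k i with rfl | hki
    · simpa [hc, ha.ne'] using hk
    · simpa [hki] using hk
  ext z
  simp [affineZeros, eval_pistar_sigmaPoly, hzero]

end WeightedProjective

/-- `r_i · N(F) ≤ ∑_{j=0}^{r_i - 1} N(π_i^*(F ∘ σ_i^j))`, i.e.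
`N(F) ≤ (1/r_i) ∑_j N(π_i^*(F ∘ σ_i^j))`. -/
theorem stmt13 (F : Type) [Field F] [Fintype F] (q n d : ℕ) (hq : Fintype.card F = q)
    (a : Fin (n + 1) → ℕ) (ha : ∀ i, 0 < a i) (i : Fin (n + 1))
    (δ : Fˣ) (hδ : ∀ z : Fˣ, z ∈ Subgroup.zpowers δ)
    (r : ℕ) (hr : r = Nat.gcd (a i) (q - 1))
    (Fp : MvPolynomial (Fin (n + 1)) F) (hF : WHomog F n a Fp d) :
    r * Nat.card (VRat F n a Fp) ≤
      ∑ j ∈ Finset.range r,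
        Nat.card (VRat F n (Function.update a i 1)
          (pistar F n a i (sigmaPoly F n i (δ : F) j Fp))) := by
  classical
  subst hq
  have hq₁ : 0 < Fintype.card F - 1 := Nat.sub_pos_of_lt Fintype.one_lt_card
  have ha' : ∀ k, 0 < Function.update a i 1 k := fun k => by
    rcases eq_or_ne k i with rfl | hk
    · simp
    · simpa [hk] using ha k
  refine Nat.le_of_mul_le_mul_left ?_ hq₁
  calc (Fintype.card F - 1) * (r * Nat.card (VRat F n a Fp))
      = r * ((Fintype.card F - 1) * Nat.card (VRat F n a Fp)) := by ring
    _ ≤ r * #(affineZeros Fp) := Nat.mul_le_mul_left _ (mul_card_VRat_le ha hF)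
    _ ≤ ∑ j ∈ range r, #(affineZeros (pistar F n a i (sigmaPoly F n i (δ : F) j Fp))) := by
        simp only [affineZeros_pistar_sigmaPoly (ha i) δ.ne_zero]
        subst hr
        exact mul_card_le_sum_card_update_mem _ i (fun j x => (δ : F) ^ j * x ^ a i) _
          (gcd_le_sum_card_mul_pow_eq hδ (ha i))
    _ ≤ ∑ j ∈ range r, (Fintype.card F - 1) * Nat.card (VRat F n (Function.update a i 1)
          (pistar F n a i (sigmaPoly F n i (δ : F) j Fp))) :=
        sum_le_sum fun j _ => card_affineZeros_le ha' _
    _ = _ := (mul_sum ..).symm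

end
end
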